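/- Let X be a compact Hausdorff space. The following are equivalent: (1) every additive zero-preserving map on C_R(X) is a multiplication (X is a υ-space); (2) every additive local multiplication on C_R(X) is a multiplication (X is a real η-space); (3) the set of q-points of X is dense in X; (4) X has no isolated points. -/

import Mathlib

open Set

noncomputable def qc (n : ℕ) : ℝ := (2:ℝ)⁻¹ ^ n
lemma qc_pos (n : ℕ) : 0 < qc n := pow_pos (by norm_num) n
lemma qc_anti {m n : ℕ} (h : m ≤ n) : qc n ≤ qc m :=
  pow_le_pow_of_le_one (by norm_num) (by norm_num) h
lemma qc_two : qc 2 = 4⁻¹ := by norm_num [qc]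
noncomputable def theta (n : ℕ) (s : ℝ) : ℝ :=
  max 0 (min 1 (min (s / qc (n+3) - 3) ((3 * qc (n+1) - s) / qc (n+1))))
lemma theta_cont (n : ℕ) : Continuous (theta n) := by
  unfold theta; fun_prop (disch := positivity)
lemma theta_nonneg (n : ℕ) (s : ℝ) : 0 ≤ theta n s := le_max_left _ _
lemma theta_le_one (n : ℕ) (s : ℝ) : theta n s ≤ 1 :=
  max_le zero_le_one (min_le_left _ _)
lemma theta_plateau {n : ℕ} {s : ℝ} (h1 : qc (n+1) ≤ s) (h2 : s ≤ qc n) :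
    theta n s = 1 := by
  have h13 : qc (n+1) = 4 * qc (n+3) := by simp [qc, pow_succ]; ring
  have hn1 : qc n = 2 * qc (n+1) := by simp [qc, pow_succ]; ring
  have hA : (1:ℝ) ≤ s / qc (n+3) - 3 := by
    rw [le_sub_iff_add_le, le_div_iff₀ (qc_pos _)]
    nlinarith [qc_pos (n+3)]
  have hB : (1:ℝ) ≤ (3 * qc (n+1) - s) / qc (n+1) := by
    rw [le_div_iff₀ (qc_pos _)]
    nlinarith [qc_pos (n+1)]
  unfold theta
  rw [min_eq_left (le_min hA hB), max_eq_right zero_le_one]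
lemma theta_zero_low {n : ℕ} {s : ℝ} (h : s ≤ 3 * qc (n+3)) : theta n s = 0 := by
  have hA : s / qc (n+3) - 3 ≤ 0 := by
    rw [sub_nonpos, div_le_iff₀ (qc_pos _)]; nlinarith [qc_pos (n+3)]
  unfold theta
  exact max_eq_left (le_trans (min_le_right _ _) (le_trans (min_le_left _ _) hA))
lemma theta_zero_high {n : ℕ} {s : ℝ} (h : 3 * qc (n+1) ≤ s) : theta n s = 0 := by
  have hB : (3 * qc (n+1) - s) / qc (n+1) ≤ 0 := by
    apply div_nonpos_of_nonpos_of_nonneg <;> [linarith; exact (qc_pos _).le]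
  unfold theta
  exact max_eq_left (le_trans (min_le_right _ _) (le_trans (min_le_right _ _) hB))
lemma exists_band {s : ℝ} (h0 : 0 < s) (h2 : s ≤ qc 2) :
    ∃ n, 2 ≤ n ∧ qc (n+1) < s ∧ s ≤ qc n := by
  classical
  obtain ⟨m, hm⟩ : ∃ m, qc m < s := exists_pow_lt_of_lt_one h0 (by norm_num : (2:ℝ)⁻¹ < 1)
  set P : ℕ → Prop := fun n => s ≤ qc n with hP
  set M := max m 2 with hM
  have hP2 : P 2 := h2
  have hnPM : ¬ P M := fun h =>
    absurd (le_trans h (qc_anti (le_max_left m 2))) (not_le.mpr hm)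
  set n := Nat.findGreatest P M with hn
  have h2n : 2 ≤ n := Nat.le_findGreatest (le_max_right m 2) hP2
  have hPn : P n := Nat.findGreatest_spec (le_max_right m 2) hP2
  have hnM : n < M := lt_of_le_of_ne (Nat.findGreatest_le M) (fun h => hnPM (h ▸ hPn))
  exact ⟨n, h2n, not_le.mp (Nat.findGreatest_is_greatest (Nat.lt_succ_self n) hnM), hPn⟩

lemma hasSum_apply' {X : Type*} [TopologicalSpace X]
    {F : ℕ → C(X, ℝ)} {S : C(X, ℝ)} (h : HasSum F S) (y : X) :
    HasSum (fun n => F n y) (S y) :=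
  h.map (AddMonoidHom.mk' (fun f : C(X,ℝ) => f y) (fun a b => rfl))
    (continuous_eval_const y)

/-- `x` is a P-point of `X`: every continuous (real-valued) function is constant on a
neighborhood of `x`; a q-point is a non-P-point. -/
def IsQPoint {X : Type*} [TopologicalSpace X] (x : X) : Prop :=
  ¬ ∀ f : C(X, ℂ), ∃ U : Set X, IsOpen U ∧ x ∈ U ∧ ∀ y ∈ U, f y = f x

lemma lemA {X : Type*} [TopologicalSpace X] [CompactSpace X] [T2Space X]
    (x : X) (hx : IsQPoint x) (t : ℝ) :
    ∃ u : C(X, ℝ), u x = t ∧ x ∈ closure {y : X | ∃ q : ℚ, u y = (q : ℝ)} := by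
  classical
  unfold IsQPoint at hx
  push_neg at hx
  obtain ⟨F, hF⟩ := hx
  set g : C(X, ℝ) := ⟨fun y => min ‖F y - F x‖ 4⁻¹,
    Continuous.min (Continuous.norm (F.continuous.sub continuous_const)) continuous_const⟩
    with hgdef
  have hg0 : g x = 0 := by simp [hgdef]
  have hqr' : ∀ n : ℕ, ∃ q : ℚ, |t - (q:ℝ)| < qc n := fun n => exists_rat_near t (qc_pos n)
  choose qr hqr using hqr'
  set ν : ℕ → ℕ → ℕ := fun r k => 2*k + 2 + r with hν
  set bump : ℕ → ℕ → C(X, ℝ) := fun r k =>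
    ⟨fun y => theta (ν r k) (g y), (theta_cont _).comp g.continuous⟩ with hbump
  set Term : ℕ → ℕ → C(X, ℝ) := fun r k => ((qr (ν r k) : ℝ) - t) • bump r k with hTerm
  have hTermval : ∀ r k y, Term r k y = ((qr (ν r k) : ℝ) - t) * theta (ν r k) (g y) :=
    fun r k y => rfl
  have hsumm : ∀ r, Summable (Term r) := by
    intro r
    apply Summable.of_norm_bounded (g := fun k => (4⁻¹ : ℝ) ^ k)
      (summable_geometric_of_lt_one (by norm_num) (by norm_num))
    intro k
    have h3 : qc (ν r k) ≤ (4⁻¹:ℝ) ^ k := by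
      have he : qc (2*k) = (4⁻¹:ℝ)^k := by
        rw [qc, pow_mul]; norm_num
      calc qc (ν r k) ≤ qc (2*k) := qc_anti (by simp [hν]; omega)
        _ = _ := he
    rw [ContinuousMap.norm_le _ (by positivity)]
    intro y
    rw [hTermval r k y, Real.norm_eq_abs, abs_mul]
    have h2 : |(qr (ν r k) : ℝ) - t| ≤ qc (ν r k) := by
      rw [abs_sub_comm]; exact (hqr _).le
    have h1 : |theta (ν r k) (g y)| ≤ 1 := by
      rw [abs_le]
      exact ⟨by linarith [theta_nonneg (ν r k) (g y)], theta_le_one _ _⟩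
    calc |(qr (ν r k) : ℝ) - t| * |theta (ν r k) (g y)| ≤ qc (ν r k) * 1 :=
          mul_le_mul h2 h1 (abs_nonneg _) ((qc_pos _).le)
      _ ≤ _ := by rw [mul_one]; exact h3
  set S : ℕ → C(X,ℝ) := fun r => ∑' k, Term r k with hS
  have hHS : ∀ r, HasSum (Term r) (S r) := fun r => (hsumm r).hasSum
  set u : ℕ → C(X,ℝ) := fun r => ContinuousMap.const X t + S r with hu
  have hux : ∀ r, u r x = t := by
    intro r
    have h0 : HasSum (fun k => Term r k x) 0 := by
      have hz : (fun k => Term r k x) = fun _ => (0:ℝ) := by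
        funext k
        rw [hTermval, hg0, theta_zero_low (n := ν r k) (s := 0) (by linarith [qc_pos (ν r k + 3)]), mul_zero]
      rw [hz]; exact hasSum_zero
    have hSx := (hasSum_apply' (hHS r) x).unique h0
    simp [hu, ContinuousMap.add_apply, hSx]
  have huy : ∀ r y n, (qc (ν r n + 1) ≤ g y) → (g y ≤ qc (ν r n)) →
      u r y = (qr (ν r n) : ℝ) := by
    intro r y n h1 h2
    have hterm0 : ∀ m, m ≠ n → Term r m y = 0 := by
      intro m hm
      rw [hTermval]
      rcases lt_or_gt_of_ne hm with hlt | hgt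
      · have hle : g y ≤ 3 * qc (ν r m + 3) := by
          have hmn : ν r m + 3 ≤ ν r n + 1 := by simp [hν]; omega
          have hq : qc (ν r n + 1) ≤ qc (ν r m + 3) := qc_anti hmn
          have h4 : qc (ν r n) = 2 * qc (ν r n + 1) := by simp [qc, pow_succ]; ring
          nlinarith [qc_pos (ν r n + 1)]
        rw [theta_zero_low hle, mul_zero]
      · have hge : 3 * qc (ν r m + 1) ≤ g y := by
          have hmn : ν r n + 3 ≤ ν r m + 1 := by simp [hν]; omega
          have hq : qc (ν r m + 1) ≤ qc (ν r n + 3) := qc_anti hmn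
          have h4 : 4 * qc (ν r n + 3) = qc (ν r n + 1) := by simp [qc, pow_succ]; ring
          nlinarith [qc_pos (ν r n + 3)]
        rw [theta_zero_high hge, mul_zero]
    have hsingle : HasSum (fun m => Term r m y) (Term r n y) := hasSum_single n hterm0
    have heq := (hasSum_apply' (hHS r) y).unique hsingle
    rw [hu]
    simp only [ContinuousMap.add_apply, ContinuousMap.const_apply]
    rw [heq, hTermval, theta_plateau h1 h2, mul_one]
    ring
  have hcov : ∀ U : Set X, IsOpen U → x ∈ U →
      ∃ y ∈ U, ∃ n, 2 ≤ n ∧ qc (n+1) ≤ g y ∧ g y ≤ qc n := by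
    intro U hUo hxU
    obtain ⟨y, hyU, hyne⟩ := hF U hUo hxU
    have h0 : 0 < g y := lt_min (norm_pos_iff.mpr (sub_ne_zero.mpr hyne)) (by norm_num)
    have h2 : g y ≤ qc 2 := by rw [qc_two]; exact min_le_right _ _
    obtain ⟨n, hn2, hlow, hhigh⟩ := exists_band h0 h2
    exact ⟨y, hyU, n, hn2, hlow.le, hhigh⟩
  have hor : x ∈ closure {y | ∃ k, qc (ν 0 k + 1) ≤ g y ∧ g y ≤ qc (ν 0 k)}
      ∨ x ∈ closure {y | ∃ k, qc (ν 1 k + 1) ≤ g y ∧ g y ≤ qc (ν 1 k)} := by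
    by_contra hcon
    push_neg at hcon
    obtain ⟨hc0, hc1⟩ := hcon
    rw [mem_closure_iff] at hc0 hc1
    push_neg at hc0 hc1
    obtain ⟨U0, hU0o, hxU0, hU0e⟩ := hc0
    obtain ⟨U1, hU1o, hxU1, hU1e⟩ := hc1
    obtain ⟨y, hyU, n, hn2, hlow, hhigh⟩ := hcov (U0 ∩ U1) (hU0o.inter hU1o) ⟨hxU0, hxU1⟩
    rcases Nat.even_or_odd n with he | ho
    · obtain ⟨j, hj⟩ := he
      have hk : ν 0 ((n-2)/2) = n := by simp only [hν]; omega
      exact (Set.eq_empty_iff_forall_notMem.mp hU0e) y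
        ⟨hyU.1, ⟨(n-2)/2, by rw [hk]; exact ⟨hlow, hhigh⟩⟩⟩
    · obtain ⟨j, hj⟩ := ho
      have hk : ν 1 ((n-3)/2) = n := by simp only [hν]; omega
      exact (Set.eq_empty_iff_forall_notMem.mp hU1e) y
        ⟨hyU.2, ⟨(n-3)/2, by rw [hk]; exact ⟨hlow, hhigh⟩⟩⟩
  rcases hor with h | h
  · exact ⟨u 0, hux 0, closure_mono
      (fun y hy => by obtain ⟨k, h1, h2⟩ := hy; exact ⟨qr (ν 0 k), huy 0 y k h1 h2⟩) h⟩
  · exact ⟨u 1, hux 1, closure_mono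
      (fun y hy => by obtain ⟨k, h1, h2⟩ := hy; exact ⟨qr (ν 1 k), huy 1 y k h1 h2⟩) h⟩

lemma three_to_one {X : Type*} [TopologicalSpace X] [CompactSpace X] [T2Space X]
    (h3 : Dense {x : X | IsQPoint x})
    (T : C(X, ℝ) → C(X, ℝ))
    (hadd : ∀ f g, T (f + g) = T f + T g)
    (hzero : ∀ f : C(X, ℝ), ∀ x : X, f x = 0 → T f x = 0) :
    ∃ h, ∀ f, T f = h * f := by
  have hTsub : ∀ f g : C(X,ℝ), T ((f - g) + g) = T (f - g) + T g := fun f g => hadd _ _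
  have hTrat : ∀ (s : ℚ), T ((s:ℝ) • (1 : C(X,ℝ))) = (s:ℝ) • T 1 := by
    intro s
    have h1 := ((AddMonoidHom.mk' T hadd).toRatLinearMap).map_smul s (1 : C(X,ℝ))
    have h2 : (AddMonoidHom.mk' T hadd).toRatLinearMap (1 : C(X,ℝ)) = T 1 := rfl
    have h3' : ((AddMonoidHom.mk' T hadd).toRatLinearMap) (s • (1 : C(X,ℝ))) =
        T (s • (1 : C(X,ℝ))) := rfl
    rw [h3', h2] at h1
    have hcast : (s • (1 : C(X,ℝ))) = (s:ℝ) • (1 : C(X,ℝ)) := by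
      ext y; simp [Rat.smul_def]
    have hcast2 : s • T 1 = (s:ℝ) • T 1 := by
      ext y; simp [Rat.smul_def]
    rw [← hcast, h1, hcast2]
  refine ⟨T 1, fun f => ?_⟩
  have key : ∀ x : X, IsQPoint x → T f x = (T 1 * f) x := by
    intro x hqx
    obtain ⟨u, hux, hucl⟩ := lemA x hqx (f x)
    -- T f x = T u x
    have step1 : T f x = T u x := by
      have h1 := hTsub f u
      rw [sub_add_cancel] at h1
      have h2 : T (f - u) x = 0 := hzero _ x (by simp [hux])
      rw [h1, ContinuousMap.add_apply, h2, zero_add]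
    -- on rational points, T u = T 1 * u
    have hsub : {y : X | ∃ q : ℚ, u y = (q:ℝ)} ⊆ {y : X | T u y = T 1 y * u y} := by
      rintro y ⟨q, hq⟩
      have h1 := hTsub u ((q:ℝ) • (1 : C(X,ℝ)))
      rw [sub_add_cancel] at h1
      have h2 : T (u - (q:ℝ) • (1 : C(X,ℝ))) y = 0 := by
        apply hzero
        simp [hq]
      have h3 : T ((q:ℝ) • (1 : C(X,ℝ))) y = (q:ℝ) * T 1 y := by
        rw [hTrat q]; simp
      show T u y = T 1 y * u y
      rw [h1, ContinuousMap.add_apply, h2, zero_add, h3, hq, mul_comm]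
    have hclosed : IsClosed {y : X | T u y = T 1 y * u y} :=
      isClosed_eq (T u).continuous ((T 1).continuous.mul u.continuous)
    have hxE : T u x = T 1 x * u x := by
      have := closure_mono hsub hucl
      rwa [hclosed.closure_eq] at this
    rw [step1, hxE, hux, ContinuousMap.mul_apply]
  have hfun : ⇑(T f) = ⇑(T 1 * f) :=
    Continuous.ext_on h3 (T f).continuous (T 1 * f).continuous key
  exact ContinuousMap.coe_injective hfun

lemma exists_additive_nonlinear :
    ∃ ψ : ℝ → ℝ, (∀ a b, ψ (a + b) = ψ a + ψ b) ∧ ∀ a : ℝ, ∃ c, ψ c ≠ a * c := by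
  set L : Submodule ℚ ℝ := Submodule.span ℚ {1} with hL
  obtain ⟨C, hC⟩ := Submodule.exists_isCompl L
  set π := L.projectionOnto C hC with hπ
  refine ⟨fun r => (π r : ℝ), fun a b => by simp only [map_add, Submodule.coe_add], ?_⟩
  intro a
  by_contra hcon
  push_neg at hcon
  have h1mem : (1:ℝ) ∈ L := Submodule.mem_span_singleton_self 1
  have hψ1 : ((π 1 : L) : ℝ) = 1 := by
    have := Submodule.linearProjOfIsCompl_apply_left hC ⟨1, h1mem⟩
    rw [hπ]
    rw [show ((⟨1, h1mem⟩ : L) : ℝ) = (1:ℝ) from rfl] at this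
    rw [this]
  have ha1 : a = 1 := by
    have := hcon 1
    rw [hψ1, mul_one] at this
    exact this.symm
  have hmem : ((π (Real.sqrt 2) : L) : ℝ) ∈ L := (π (Real.sqrt 2)).2
  have hmem' : ((π (Real.sqrt 2) : L) : ℝ) ∈ Submodule.span ℚ ({1} : Set ℝ) := hmem
  rw [Submodule.mem_span_singleton] at hmem'
  obtain ⟨q, hq⟩ := hmem'
  rw [Rat.smul_one_eq_cast] at hq
  have heq : ((π (Real.sqrt 2) : L) : ℝ) = Real.sqrt 2 := by
    rw [hcon (Real.sqrt 2), ha1, one_mul]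
  rw [heq] at hq
  exact irrational_sqrt_two ⟨q, hq⟩

lemma shrink {X : Type*} [TopologicalSpace X] [CompactSpace X] [T2Space X]
    {U : Set X} (hU : IsOpen U) {x : X} (hx : x ∈ U) :
    ∃ W : Set X, IsOpen W ∧ x ∈ W ∧ closure W ⊆ U := by
  obtain ⟨Cs, ⟨hCn, hCc⟩, hCU⟩ := (closed_nhds_basis x).mem_iff.mp (hU.mem_nhds hx)
  refine ⟨interior Cs, isOpen_interior, mem_interior_iff_mem_nhds.mpr hCn, ?_⟩
  calc closure (interior Cs) ⊆ closure Cs := closure_mono interior_subset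
    _ = Cs := hCc.closure_eq
    _ ⊆ U := hCU

lemma two_to_three {X : Type*} [TopologicalSpace X] [CompactSpace X] [T2Space X]
    (h2 : ∀ T : C(X, ℝ) → C(X, ℝ),
      (∀ f g, T (f + g) = T f + T g) →
      (∀ f, ∃ h, T f = h * f) →
      ∃ h, ∀ f, T f = h * f) :
    Dense {x : X | IsQPoint x} := by
  by_contra hnd
  rw [dense_iff_inter_open] at hnd
  push_neg at hnd
  obtain ⟨V, hVo, hVne, hVq⟩ := hnd
  have hP : ∀ y ∈ V, ∀ f : C(X, ℝ), ∃ O, IsOpen O ∧ y ∈ O ∧ ∀ z ∈ O, f z = f y := by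
    intro y hy f
    have hnq : ¬ IsQPoint y := by
      intro h
      exact (Set.eq_empty_iff_forall_notMem.mp hVq) y ⟨hy, h⟩
    have h' := not_not.mp hnq
      ⟨fun z => ((f z : ℝ) : ℂ), Complex.continuous_ofReal.comp f.continuous⟩
    obtain ⟨O, hOo, hyO, hOc⟩ := h'
    exact ⟨O, hOo, hyO, fun z hz => Complex.ofReal_inj.mp (hOc z hz)⟩
  obtain ⟨x₀, hx₀⟩ := hVne
  obtain ⟨W, hWo, hxW, hWcl⟩ := shrink hVo hx₀
  obtain ⟨e, he0, he1, heI⟩ := exists_continuous_zero_one_of_isClosed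
    (hWo.isClosed_compl) (isClosed_singleton (x := x₀))
    (by simp [Set.disjoint_singleton_right, hxW])
  obtain ⟨ψ, hψadd, hψnl⟩ := exists_additive_nonlinear
  have hψ0 : ψ 0 = 0 := by
    have := hψadd 0 0
    rw [add_zero] at this
    linarith
  have claim : ∀ (f : C(X,ℝ)) (Φ : ℝ → ℝ), Continuous fun y => e y * Φ (f y) := by
    intro f Φ
    rw [continuous_iff_continuousAt]
    intro y
    by_cases hy : y ∈ V
    · obtain ⟨O, hOo, hyO, hOc⟩ := hP y hy f
      have hev : (fun z => e z * Φ (f z)) =ᶠ[nhds y] fun z => e z * Φ (f y) := by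
        filter_upwards [hOo.mem_nhds hyO] with z hz
        rw [hOc z hz]
      exact ContinuousAt.congr ((e.continuous.mul continuous_const).continuousAt) hev.symm
    · have hyW : y ∈ (closure W)ᶜ := fun hc => hy (hWcl hc)
      have hev : (fun z => e z * Φ (f z)) =ᶠ[nhds y] fun _ => (0:ℝ) := by
        filter_upwards [(isClosed_closure.isOpen_compl).mem_nhds hyW] with z hz
        rw [he0 (fun hzW => hz (subset_closure hzW)), Pi.zero_apply, zero_mul]
      exact ContinuousAt.congr continuousAt_const hev.symm
  set T : C(X,ℝ) → C(X,ℝ) := fun f => ⟨fun y => e y * ψ (f y), claim f ψ⟩ with hT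
  have hadd : ∀ f g, T (f + g) = T f + T g := by
    intro f g
    ext y
    show e y * ψ (f y + g y) = e y * ψ (f y) + e y * ψ (g y)
    rw [hψadd, mul_add]
  have hloc : ∀ f, ∃ h, T f = h * f := by
    intro f
    refine ⟨⟨fun y => e y * (ψ (f y) / f y), claim f (fun v => ψ v / v)⟩, ?_⟩
    ext y
    show e y * ψ (f y) = (e y * (ψ (f y) / f y)) * f y
    by_cases h : f y = 0
    · rw [h, mul_zero, hψ0, mul_zero]
    · field_simp
  obtain ⟨h, hh⟩ := h2 T hadd hloc
  obtain ⟨cbad, hcbad⟩ := hψnl (h x₀)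
  apply hcbad
  have := congrArg (fun F : C(X,ℝ) => F x₀) (hh (ContinuousMap.const X cbad))
  have he1' : e x₀ = 1 := he1 rfl
  simpa [hT, he1'] using this

lemma four_to_three {X : Type*} [TopologicalSpace X] [CompactSpace X] [T2Space X]
    (h4 : ∀ x : X, ¬ IsOpen ({x} : Set X)) :
    Dense {x : X | IsQPoint x} := by
  rw [dense_iff_inter_open]
  rintro U hUo ⟨x₀, hx₀⟩
  obtain ⟨W, hWo, hxW, hWcl⟩ := shrink hUo hx₀
  classical
  have hWgood : IsOpen W ∧ W.Nonempty ∧ W ⊆ W := ⟨hWo, ⟨x₀, hxW⟩, subset_rfl⟩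
  have step : ∀ V : {V : Set X // IsOpen V ∧ V.Nonempty ∧ V ⊆ W},
      ∃ p : X × Set X × {V : Set X // IsOpen V ∧ V.Nonempty ∧ V ⊆ W},
      p.1 ∈ p.2.1 ∧ IsOpen p.2.1 ∧ p.2.1 ⊆ V.1 ∧ p.2.2.1 ⊆ V.1 ∧
        Disjoint p.2.1 p.2.2.1 := by
    rintro ⟨V, hVo, ⟨a, ha⟩, hVW⟩
    have hne : (V \ {a}).Nonempty := by
      by_contra hemp
      rw [Set.not_nonempty_iff_eq_empty, Set.diff_eq_empty] at hemp
      have hVa : V = {a} := Set.Subset.antisymm hemp (Set.singleton_subset_iff.mpr ha)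
      exact h4 a (hVa ▸ hVo)
    obtain ⟨b, hb, hba⟩ := hne
    have hbV : b ∈ V := hb
    obtain ⟨Ob, Oa, hObo, hOao, hbOb, haOa, hd⟩ := t2_separation
      (show b ≠ a from fun h => hba (by simp [h]))
    refine ⟨⟨a, Oa ∩ V, ⟨Ob ∩ V, hObo.inter hVo, ⟨b, hbOb, hbV⟩,
      Set.Subset.trans Set.inter_subset_right hVW⟩⟩, ⟨haOa, ha⟩, hOao.inter hVo,
      Set.inter_subset_right, Set.inter_subset_right, ?_⟩
    exact Disjoint.mono Set.inter_subset_left Set.inter_subset_left hd.symm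
  choose next hn1 hn2 hn3 hn4 hn5 using step
  set seq : ℕ → {V : Set X // IsOpen V ∧ V.Nonempty ∧ V ⊆ W} :=
    fun n => Nat.rec ⟨W, hWgood⟩ (fun _ V => (next V).2.2) n with hseq
  set p : ℕ → X := fun n => (next (seq n)).1 with hp
  set O : ℕ → Set X := fun n => (next (seq n)).2.1 with hOdef
  have hseqS : ∀ n, seq (n+1) = (next (seq n)).2.2 := fun n => rfl
  have hpO : ∀ n, p n ∈ O n := fun n => hn1 (seq n)
  have hOo : ∀ n, IsOpen (O n) := fun n => hn2 (seq n)
  have hOV : ∀ n, O n ⊆ (seq n).1 := fun n => hn3 (seq n)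
  have hVmono : ∀ n, (seq (n+1)).1 ⊆ (seq n).1 := by
    intro n; rw [hseqS n]; exact hn4 (seq n)
  have hdisj : ∀ n, Disjoint (O n) ((seq (n+1)).1) := by
    intro n; rw [hseqS n]; exact hn5 (seq n)
  have hVanti : ∀ m n, m ≤ n → (seq n).1 ⊆ (seq m).1 := by
    intro m n h
    induction n with
    | zero => rw [Nat.le_zero.mp h]
    | succ k ih =>
      rcases Nat.lt_or_ge m (k+1) with hlt | hge
      · exact (hVmono k).trans (ih (Nat.lt_succ_iff.mp hlt))
      · rw [Nat.le_antisymm h hge]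
  have hOdisj : ∀ m n, m < n → Disjoint (O m) (O n) := by
    intro m n h
    exact Disjoint.mono subset_rfl ((hOV n).trans (hVanti (m+1) n h)) (hdisj m)
  have hOW : ∀ n, O n ⊆ W := fun n => (hOV n).trans (seq n).2.2.2
  have hbump : ∀ n : ℕ, ∃ b : C(X,ℝ), Set.EqOn b 0 (O n)ᶜ ∧ Set.EqOn b 1 {p n} ∧
      ∀ z, b z ∈ Set.Icc (0:ℝ) 1 := fun n =>
    exists_continuous_zero_one_of_isClosed (hOo n).isClosed_compl
      isClosed_singleton (by simp [Set.disjoint_singleton_right, hpO n])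
  choose bb hb0 hb1 hbI using hbump
  set Term : ℕ → C(X,ℝ) := fun n => ((2:ℝ)⁻¹)^(n+1) • bb n with hTerm
  have hsumm : Summable Term := by
    apply Summable.of_norm_bounded (g := fun n => ((2:ℝ)⁻¹)^n)
      (summable_geometric_of_lt_one (by norm_num) (by norm_num))
    intro n
    rw [ContinuousMap.norm_le _ (by positivity)]
    intro y
    show ‖(((2:ℝ)⁻¹)^(n+1) • bb n) y‖ ≤ _
    rw [ContinuousMap.smul_apply, smul_eq_mul, Real.norm_eq_abs, abs_mul]
    obtain ⟨hb01, hb02⟩ := hbI n y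
    have h1 : |bb n y| ≤ 1 := abs_le.mpr ⟨by linarith, hb02⟩
    have h2 : |((2:ℝ)⁻¹)^(n+1)| = ((2:ℝ)⁻¹)^(n+1) := abs_of_nonneg (by positivity)
    rw [h2]
    calc ((2:ℝ)⁻¹)^(n+1) * |bb n y| ≤ ((2:ℝ)⁻¹)^(n+1) * 1 :=
          mul_le_mul_of_nonneg_left h1 (by positivity)
      _ ≤ ((2:ℝ)⁻¹)^n := by rw [mul_one, pow_succ]; nlinarith [pow_pos (show (0:ℝ) < 2⁻¹ by norm_num) n]
  set f : C(X,ℝ) := ∑' n, Term n with hf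
  have hHS : HasSum Term f := hsumm.hasSum
  have hfp : ∀ n, f (p n) = ((2:ℝ)⁻¹)^(n+1) := by
    intro n
    have hsingle : HasSum (fun m => Term m (p n)) (Term n (p n)) := by
      apply hasSum_single
      intro m hm
      have hpnO : p n ∉ O m := by
        rcases lt_or_gt_of_ne hm with h | h
        · exact Set.disjoint_right.mp (hOdisj m n h) (hpO n)
        · exact Set.disjoint_left.mp (hOdisj n m h) (hpO n)
      show (((2:ℝ)⁻¹)^(m+1) • bb m) (p n) = 0
      rw [ContinuousMap.smul_apply, hb0 m hpnO, Pi.zero_apply, smul_zero]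
    have heq := (hasSum_apply' hHS (p n)).unique hsingle
    rw [heq]
    show (((2:ℝ)⁻¹)^(n+1) • bb n) (p n) = _
    rw [ContinuousMap.smul_apply, hb1 n rfl, Pi.one_apply, smul_eq_mul, mul_one]
  have hple : Filter.map p Filter.atTop ≤ Filter.principal (closure W) := by
    rw [Filter.le_principal_iff, Filter.mem_map]
    exact Filter.Eventually.of_forall (fun n => subset_closure (hOW n (hpO n)))
  obtain ⟨z, hzW, hclp⟩ := (isClosed_closure (s := W)).isCompact.exists_clusterPt hple
  refine ⟨z, hWcl hzW, ?_⟩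
  show IsQPoint z
  intro hall
  obtain ⟨Uo, hUoo, hzUo, hconst⟩ := hall
    ⟨fun y => ((f y : ℝ) : ℂ), Complex.continuous_ofReal.comp f.continuous⟩
  have hfreq : ∃ᶠ n in Filter.atTop, p n ∈ Uo := by
    by_contra hns
    have hev : ∀ᶠ n in Filter.atTop, p n ∉ Uo := Filter.not_frequently.mp hns
    have h2' : Uoᶜ ∈ Filter.map p Filter.atTop := Filter.mem_map.mpr (hev.mono fun n h => h)
    have h3' : Uo ∈ nhds z := hUoo.mem_nhds hzUo
    simpa using clusterPt_iff_nonempty.mp hclp h3' h2'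
  rw [Filter.frequently_atTop] at hfreq
  obtain ⟨n₁, _, hn₁⟩ := hfreq 0
  obtain ⟨n₂, hn₂ge, hn₂⟩ := hfreq (n₁+1)
  have hfz : ∀ n, p n ∈ Uo → f (p n) = f z := by
    intro n hn
    have h := hconst (p n) hn
    simp only [ContinuousMap.coe_mk] at h
    exact_mod_cast h
  have e1 := hfz n₁ hn₁
  have e2 := hfz n₂ hn₂
  rw [hfp n₁] at e1
  rw [hfp n₂] at e2
  have heq12 : ((2:ℝ)⁻¹)^(n₁+1) = ((2:ℝ)⁻¹)^(n₂+1) := by rw [e1, e2]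
  have hlt : ((2:ℝ)⁻¹)^(n₂+1) < ((2:ℝ)⁻¹)^(n₁+1) :=
    pow_lt_pow_right_of_lt_one₀ (by norm_num) (by norm_num) (by omega)
  linarith

lemma three_to_four {X : Type*} [TopologicalSpace X] [CompactSpace X] [T2Space X]
    (h3 : Dense {x : X | IsQPoint x}) :
    ∀ x : X, ¬ IsOpen ({x} : Set X) := by
  intro x hxo
  obtain ⟨y, hy1, hy2⟩ := h3.inter_open_nonempty {x} hxo ⟨x, rfl⟩
  have hyx : y = x := hy1
  apply hy2
  intro f
  exact ⟨{x}, hxo, hyx ▸ rfl, fun z hz => by rw [show z = y from hz.trans hyx.symm]⟩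


theorem stmt19 {X : Type*} [TopologicalSpace X] [CompactSpace X] [T2Space X] :
    [ -- (1) X is a υ-space
      (∀ T : C(X, ℝ) → C(X, ℝ),
        (∀ f g, T (f + g) = T f + T g) →
        (∀ f : C(X, ℝ), ∀ x : X, f x = 0 → T f x = 0) →
        ∃ h, ∀ f, T f = h * f),
      -- (2) X is a real η-space
      (∀ T : C(X, ℝ) → C(X, ℝ),
        (∀ f g, T (f + g) = T f + T g) →
        (∀ f, ∃ h, T f = h * f) →
        ∃ h, ∀ f, T f = h * f),
      -- (3) the q-points are dense
      Dense {x : X | IsQPoint x},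
      -- (4) X has no isolated points
      (∀ x : X, ¬ IsOpen ({x} : Set X))].TFAE := by
  tfae_have 1 → 2 := by
    intro h1 T hadd hloc
    exact h1 T hadd (fun f x hx => by
      obtain ⟨w, hw⟩ := hloc f
      rw [hw, ContinuousMap.mul_apply, hx, mul_zero])
  tfae_have 2 → 3 := fun h2 => two_to_three h2
  tfae_have 3 → 1 := fun h3 T hadd hzero => three_to_one h3 T hadd hzero
  tfae_have 3 → 4 := fun h3 => three_to_four h3
  tfae_have 4 → 3 := fun h4 => four_to_three h4
  tfae_finish
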